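/- arXiv:2102.13075 — 2 statements merged into one kernel-verified Lean document; each statement's English description precedes it below -/
import Mathlib

section
/- For every upper expectation tree Q̄, every situation s, and every pointwise nondecreasing sequence (f_n) of bounded-below global variables f_n: Ω → ℝ̄ with pointwise limit f = sup_n f_n, one has lim_{n→∞} Ē_Q̄(f_n|s) = Ē_Q̄(f|s). -/
open Filter MeasureTheory Topology
open scoped ENNReal

namespace UEPaper

variable {X : Type} [Fintype X] [Nonempty X] [DecidableEq X]

/-- The set of paths: infinite sequences of states (`ω i` is the `(i+1)`-th state). -/
abbrev Path (X : Type) := ℕ → X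

/-- The prefix `ω^k` of length `k` of a path, as a list (a situation). -/
def prefixList (ω : Path X) (k : ℕ) : List X := (List.range k).map ω

/-- The cylinder event `Γ(s)` of a situation `s`. -/
def cyl (s : List X) : Set (Path X) := {ω | prefixList ω s.length = s}

/-- `f` is `n`-measurable: it depends only on the first `n` states. -/
def NMeas (n : ℕ) (f : Path X → EReal) : Prop :=
  ∀ ω ω' : Path X, prefixList ω n = prefixList ω' n → f ω = f ω'

/-- A gamble: a bounded real-valued global variable. -/
def IsGamble (f : Path X → EReal) : Prop :=
  ∃ B : ℝ, ∀ ω, -(B : EReal) ≤ f ω ∧ f ω ≤ (B : EReal)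

/-- A finitary gamble: an `n`-measurable gamble for some `n`. -/
def IsFinGamble (f : Path X → EReal) : Prop :=
  (∃ n, NMeas n f) ∧ IsGamble f

/-- An upper expectation tree: a coherent upper expectation at each situation. -/
structure UpperExpTree (X : Type) [Fintype X] [Nonempty X] where
  Q : List X → (X → ℝ) → ℝ
  le_sup : ∀ (s : List X) (f : X → ℝ), Q s f ≤ ⨆ x, f x
  subadd : ∀ (s : List X) (f g : X → ℝ), Q s (f + g) ≤ Q s f + Q s g
  pos_homog : ∀ (s : List X) (l : ℝ) (f : X → ℝ), 0 ≤ l → Q s (l • f) = l * Q s f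

/-- A (real-valued) supermartingale for the upper expectation tree `Q`. -/
def IsSupermart (Q : UpperExpTree X) (M : List X → ℝ) : Prop :=
  ∀ s : List X, Q.Q s (fun x => M (s ++ [x])) ≤ M s

/-- The game-theoretic upper expectation of a real-valued variable (used on gambles):
the infimum of `M s` over bounded-below supermartingales `M` with
`liminf_k M(ω^k) ≥ f(ω)` on `Γ(s)`. -/
noncomputable def gtG (Q : UpperExpTree X) (f : Path X → ℝ) (s : List X) : EReal :=
  sInf {a : EReal | ∃ M : List X → ℝ, IsSupermart Q M ∧ (∃ B : ℝ, ∀ t, B ≤ M t) ∧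
    (∀ ω ∈ cyl s,
      (f ω : EReal) ≤ Filter.liminf (fun k => ((M (prefixList ω k) : ℝ) : EReal)) atTop) ∧
    a = ((M s : ℝ) : EReal)}

/-- Extension to bounded-below variables, by continuity w.r.t. upper cuts:
`Ē(f|s) = lim_{c → +∞} Ē(min(f,c)|s)` (the limit of this nondecreasing net is a supremum). -/
noncomputable def gtBB (Q : UpperExpTree X) (f : Path X → EReal) (s : List X) : EReal :=
  ⨆ c : ℝ, gtG Q (fun ω => (f ω ⊓ (c : EReal)).toReal) s

/-- The game-theoretic global upper expectation `Ē_Q̄`, extended to all extended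
real variables by continuity w.r.t. lower cuts:
`Ē(f|s) = lim_{c → −∞} Ē(max(f,c)|s)` (the limit of this nonincreasing net is an infimum). -/
noncomputable def gtUE (Q : UpperExpTree X) (f : Path X → EReal) (s : List X) : EReal :=
  ⨅ c : ℝ, gtBB Q (fun ω => f ω ⊔ (c : EReal)) s

/-- A precise probability tree: a probability mass function at each situation. -/
structure PreciseTree (X : Type) [Fintype X] where
  p : List X → X → ℝ
  nonneg : ∀ (s : List X) (x : X), 0 ≤ p s x
  sum_one : ∀ s : List X, ∑ x, p s x = 1

/-- An imprecise probability tree: a nonempty closed convex set of probability mass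
functions at each situation. -/
structure ImpreciseTree (X : Type) [Fintype X] where
  sets : List X → Set (X → ℝ)
  nonempty' : ∀ s : List X, (sets s).Nonempty
  closed' : ∀ s : List X, IsClosed (sets s)
  convex' : ∀ s : List X, Convex ℝ (sets s)
  prob' : ∀ s : List X, ∀ q ∈ sets s, (∀ x, 0 ≤ q x) ∧ ∑ x, q x = 1

/-- `p ∼ 𝒫`: the precise tree `p` is compatible with the imprecise tree `P`. -/
def Compatible (p : PreciseTree X) (P : ImpreciseTree X) : Prop :=
  ∀ s : List X, p.p s ∈ P.sets s

/-- The probability `P_p(Γ(z)|s)` of the cylinder of `z` conditional on situation `s`. -/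
noncomputable def cylProb (p : List X → X → ℝ) (s z : List X) : ℝ :=
  if s.length < z.length ∧ z.take s.length = s then
    ∏ i ∈ Finset.Ico s.length z.length, p (z.take i) (z.getD i (Classical.arbitrary X))
  else if z.length ≤ s.length ∧ s.take z.length = z then 1 else 0

/-- The σ-algebra `ℱ` on paths generated by the cylinder events. -/
instance cylSigma : MeasurableSpace (Path X) :=
  MeasurableSpace.generateFrom {A | ∃ s : List X, A = cyl s}

/-- `μ` is the probability measure `P_p(·|s)` on `ℱ` determined by the tree `p`. -/
def IsTreeMeasure (p : PreciseTree X) (s : List X) (μ : Measure (Path X)) : Prop :=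
  IsProbabilityMeasure μ ∧ ∀ z : List X, μ (cyl z) = ENNReal.ofReal (cylProb p.p s z)

/-- Positive part of an extended real, in `ℝ≥0∞`. -/
noncomputable def posPart (x : EReal) : ℝ≥0∞ := if x = ⊤ then ⊤ else ENNReal.ofReal x.toReal

/-- The Lebesgue integral `∫ g dμ = ∫ g⁺ dμ − ∫ g⁻ dμ` of an extended-real variable
(well-defined, with value in `(-∞, +∞]`, for bounded-below measurable `g`). -/
noncomputable def integralE (μ : Measure (Path X)) (g : Path X → EReal) : EReal :=
  ((∫⁻ ω, posPart (g ω) ∂μ : ℝ≥0∞) : EReal) - ((∫⁻ ω, posPart (-(g ω)) ∂μ : ℝ≥0∞) : EReal)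

/-- The upper integral `Ē_p(f|s)`: infimum of integrals of bounded-below
`ℱ`-measurable variables dominating `f`. -/
noncomputable def upperInt (μ : Measure (Path X)) (f : Path X → EReal) : EReal :=
  sInf {a : EReal | ∃ g : Path X → EReal, Measurable g ∧ (∃ B : ℝ, ∀ ω, (B : EReal) ≤ g ω) ∧
    (∀ ω, f ω ≤ g ω) ∧ a = integralE μ g}

/-- The measure-theoretic global upper expectation `Ē_𝒫(f|s)`, given the assignment
`Pm` of the measures `P_p(·|s)` to precise trees: the upper envelope of the upper
integrals over all compatible precise trees. -/
noncomputable def muUE (Pm : PreciseTree X → List X → Measure (Path X))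
    (P : ImpreciseTree X) (f : Path X → EReal) (s : List X) : EReal :=
  ⨆ (p : PreciseTree X) (_ : Compatible p P), upperInt (Pm p s) f

/-- The trees `P` and `Q` agree: each `Q̄_s` is the upper envelope of the expectations
corresponding to the credal set `𝒫_s`. -/
def Agree (P : ImpreciseTree X) (Q : UpperExpTree X) : Prop :=
  ∀ (s : List X) (f : X → ℝ),
    Q.Q s f = sSup {r : ℝ | ∃ q ∈ P.sets s, r = ∑ x, f x * q x}

/-- Axioms P1–P5 for a global upper expectation `E` w.r.t. the tree `Q`. -/
structure Axioms (Q : UpperExpTree X) (E : (Path X → EReal) → List X → EReal) : Prop where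
  p1 : ∀ (f : X → ℝ) (s : List X),
    E (fun ω => ((f (ω s.length) : ℝ) : EReal)) s = ((Q.Q s f : ℝ) : EReal)
  p2 : ∀ f : Path X → EReal, IsFinGamble f → ∀ s : List X, E f s = E ((cyl s).indicator f) s
  p3 : ∀ f : Path X → EReal, IsFinGamble f → ∀ s : List X,
    E f s ≤ E (fun ω => E f (prefixList ω (s.length + 1))) s
  p4 : ∀ f g : Path X → EReal, (∀ ω, f ω ≤ g ω) → ∀ s : List X, E f s ≤ E g s
  p5 : ∀ (s : List X) (fn : ℕ → Path X → EReal) (f : Path X → EReal),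
    (∀ n, IsFinGamble (fn n)) → (∃ B : ℝ, ∀ n ω, (B : EReal) ≤ fn n ω) →
    (∀ ω, Tendsto (fun n => fn n ω) atTop (nhds (f ω))) →
    E f s ≤ limsup (fun n => E (fn n) s) atTop

/-- Upper semicontinuity of an extended-real variable on the path space. -/
def USC [TopologicalSpace X] [DiscreteTopology X] (f : Path X → EReal) : Prop :=
  ∀ a : ℝ, IsOpen {ω : Path X | f ω < (a : EReal)}

/-- An `Ω`-capacity (Dellacherie): a monotone `[0,∞]`-valued functional on nonnegative
variables, continuous along nondecreasing sequences, and continuous along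
nonincreasing sequences of nonnegative real-valued upper semicontinuous functions. -/
def IsCapacity [TopologicalSpace X] [DiscreteTopology X]
    (F : (Path X → EReal) → EReal) : Prop :=
  (∀ f : Path X → EReal, (∀ ω, 0 ≤ f ω) → 0 ≤ F f) ∧
  (∀ f g : Path X → EReal, (∀ ω, 0 ≤ f ω) → (∀ ω, 0 ≤ g ω) → (∀ ω, f ω ≤ g ω) → F f ≤ F g) ∧
  (∀ fn : ℕ → Path X → EReal, (∀ n ω, 0 ≤ fn n ω) → Monotone fn →
    Tendsto (fun n => F (fn n)) atTop (nhds (F (fun ω => ⨆ n, fn n ω)))) ∧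
  (∀ fn : ℕ → Path X → EReal, (∀ n ω, 0 ≤ fn n ω ∧ fn n ω < ⊤) → (∀ n, USC (fn n)) →
    Antitone fn →
    Tendsto (fun n => F (fn n)) atTop (nhds (F (fun ω => ⨅ n, fn n ω))))

open Classical in
/-- The metric `δ(ω,ω') = 2^{-n}`, `n` the first (1-based) index where `ω` and `ω'` differ. -/
noncomputable def delta (ω ω' : Path X) : ℝ :=
  if h : ω = ω' then 0
  else (1 / 2 : ℝ) ^ (Nat.find (Function.ne_iff.mp h) + 1)

/-- The product topology on the path space (with `X` discrete). -/
def prodTop (X : Type) : TopologicalSpace (ℕ → X) :=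
  @Pi.topologicalSpace ℕ (fun _ => X) (fun _ => ⊥)

/-!
By its definition through upper cuts, the extension to bounded-below variables reduces the
claim to a nondecreasing sequence of uniformly bounded gambles `gₙ ↑ G`, and only
`Ē(G|s) ≤ supₙ Ē(gₙ|s)` needs proof. The processes `Ē(gₙ|·)` are supermartingales, hence so is
their supremum `E`. Along a path on which some `Ē(gₙ|ω^k)` does not end up above `gₙ(ω)`, it
dips infinitely often below a rational level `a`, while every superhedge of `gₙ` bought at such
a dip ends up above a rational level `b > a`: buying at the dips and selling at the recoveries
makes unbounded capital. Adding to `E` the `ε`-multiple of a countable mixture of these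
upcrossing strategies gives a superhedge of `G` starting from `E(s) + ε`.
-/

section
omit [DecidableEq X]

namespace UpperExpTree

variable (Q : UpperExpTree X) (s : List X)

lemma Q_const (c : ℝ) : Q.Q s (fun _ => c) = c := by
  have hzero : Q.Q s 0 = 0 := by simpa using Q.pos_homog s 0 0 le_rfl
  have hle : ∀ c : ℝ, Q.Q s (fun _ => c) ≤ c := fun c => by simpa using Q.le_sup s fun _ => c
  have hsub := Q.subadd s (fun _ => c) (fun _ => -c)
  rw [show (fun _ : X => c) + (fun _ => -c) = 0 by ext; simp, hzero] at hsub
  linarith [hle c, hle (-c)]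

lemma Q_mono {f g : X → ℝ} (h : f ≤ g) : Q.Q s f ≤ Q.Q s g := by
  have hsub := Q.subadd s g (f - g)
  have hnonpos : Q.Q s (f - g) ≤ 0 :=
    (Q.le_sup s _).trans (ciSup_le fun x => by simpa using h x)
  rw [add_sub_cancel] at hsub
  linarith

lemma Q_add_const (f : X → ℝ) (c : ℝ) : Q.Q s (fun x => f x + c) = Q.Q s f + c := by
  refine le_antisymm ((Q.subadd s f fun _ => c).trans_eq (by rw [Q_const])) ?_
  have hsub := Q.subadd s (fun x => f x + c) (fun _ => -c)
  rw [Q_const, show ((fun x => f x + c) + fun _ => -c) = f by ext; simp] at hsub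
  linarith

lemma Q_const_mul (f : X → ℝ) {c : ℝ} (hc : 0 ≤ c) :
    Q.Q s (fun x => c * f x) = c * Q.Q s f :=
  Q.pos_homog s c f hc

lemma Q_sum_le {ι : Type*} (I : Finset ι) (f : ι → X → ℝ) :
    Q.Q s (fun x => ∑ i ∈ I, f i x) ≤ ∑ i ∈ I, Q.Q s (f i) := by
  classical
  induction I using Finset.induction_on with
  | empty => simp [Q_const]
  | insert a I ha ih =>
    simp only [Finset.sum_insert ha]
    exact (Q.subadd s (f a) _).trans (by linarith)

lemma exists_le_Q (f : X → ℝ) : ∃ x, f x ≤ Q.Q s f := by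
  obtain ⟨x, hx⟩ := Finite.exists_min f
  exact ⟨x, (Q.Q_const s (f x)).ge.trans (Q.Q_mono s hx)⟩

end UpperExpTree

namespace IsSupermart

variable {Q : UpperExpTree X} {M N : List X → ℝ}

lemma const (Q : UpperExpTree X) (c : ℝ) : IsSupermart Q fun _ => c :=
  fun t => (Q.Q_const t c).le

lemma add (hM : IsSupermart Q M) (hN : IsSupermart Q N) : IsSupermart Q fun t => M t + N t :=
  fun t => (Q.subadd t _ _).trans (add_le_add (hM t) (hN t))

lemma const_mul (hM : IsSupermart Q M) {c : ℝ} (hc : 0 ≤ c) : IsSupermart Q fun t => c * M t :=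
  fun t => (Q.Q_const_mul t _ hc).trans_le (mul_le_mul_of_nonneg_left (hM t) hc)

lemma add_const (hM : IsSupermart Q M) (c : ℝ) : IsSupermart Q fun t => M t + c :=
  fun t => (Q.Q_add_const t _ c).trans_le (add_le_add_left (hM t) c)

lemma exists_child_le (hM : IsSupermart Q M) (t : List X) : ∃ x, M (t ++ [x]) ≤ M t :=
  (Q.exists_le_Q t _).imp fun _ hx => hx.trans (hM t)

/-- Only the finitely many children of a node have to be dominated, which is why a single
index of the nondecreasing family suffices. -/
lemma ciSup {M : ℕ → List X → ℝ} (hM : ∀ n, IsSupermart Q (M n))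
    (hmono : ∀ t, Monotone fun n => M n t) (hbdd : ∀ t, BddAbove (Set.range fun n => M n t)) :
    IsSupermart Q fun t => ⨆ n, M n t := by
  intro t
  refine le_of_forall_pos_le_add fun δ hδ => ?_
  choose n hn using fun x : X => exists_lt_of_lt_ciSup (sub_lt_self (⨆ n, M n (t ++ [x])) hδ)
  obtain ⟨x₀, hx₀⟩ := Finite.exists_max n
  have hchild : ∀ x, ⨆ n, M n (t ++ [x]) ≤ M (n x₀) (t ++ [x]) + δ := fun x => by
    linarith [hn x, hmono (t ++ [x]) (hx₀ x)]
  calc Q.Q t (fun x => ⨆ n, M n (t ++ [x]))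
      ≤ Q.Q t (fun x => M (n x₀) (t ++ [x]) + δ) := Q.Q_mono t hchild
    _ ≤ M (n x₀) t + δ := by rw [Q.Q_add_const]; linarith [hM (n x₀) t]
    _ ≤ (⨆ n, M n t) + δ := by linarith [le_ciSup (hbdd t) (n x₀)]

end IsSupermart

/-- The mixture `∑ⱼ 2^{-(j+1)} Tⱼ` of capital processes, where process `j` is only started at
depth `j` and contributes its initial capital `1` before. -/
noncomputable def mixture (T : ℕ → List X → ℝ) (t : List X) : ℝ :=
  (1 / 2) ^ t.length + ∑ j ∈ Finset.range t.length, (1 / 2) ^ (j + 1) * T j t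

section Mixture

variable {T : ℕ → List X → ℝ}

section
omit [Fintype X] [Nonempty X]

lemma mixture_eq_one {t : List X} (h : ∀ j < t.length, T j t = 1) : mixture T t = 1 := by
  have hgeom : ∀ N, (1 / 2 : ℝ) ^ N + ∑ j ∈ Finset.range N, (1 / 2) ^ (j + 1) = 1 := by
    intro N
    induction N with
    | zero => simp
    | succ N ih => rw [Finset.sum_range_succ, pow_succ]; linarith
  rw [mixture, Finset.sum_congr rfl fun j hj => by rw [h j (Finset.mem_range.mp hj), mul_one]]
  exact hgeom _

lemma mul_le_mixture (hT : ∀ j t, 0 ≤ T j t) {j : ℕ} {t : List X} (hj : j < t.length) :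
    (1 / 2) ^ (j + 1) * T j t ≤ mixture T t := by
  have := Finset.single_le_sum (f := fun i => (1 / 2 : ℝ) ^ (i + 1) * T i t)
    (fun i _ => mul_nonneg (by positivity) (hT i t)) (Finset.mem_range.mpr hj)
  exact this.trans (le_add_of_nonneg_left (by positivity))

lemma mixture_nonneg (hT : ∀ j t, 0 ≤ T j t) (t : List X) : 0 ≤ mixture T t :=
  add_nonneg (by positivity) (Finset.sum_nonneg fun i _ => mul_nonneg (by positivity) (hT i t))

end

lemma isSupermart_mixture {Q : UpperExpTree X} (hT : ∀ j, IsSupermart Q (T j))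
    (hT_start : ∀ t, T t.length t = 1) : IsSupermart Q (mixture T) := by
  intro t
  have hchild : ∀ x : X, mixture T (t ++ [x]) =
      ∑ j ∈ Finset.range (t.length + 1), (1 / 2) ^ (j + 1) * T j (t ++ [x]) +
        (1 / 2) ^ (t.length + 1) := fun x => by
    simp only [mixture, List.length_append, List.length_singleton]; ring
  have hterm : ∀ j, Q.Q t (fun x => (1 / 2 : ℝ) ^ (j + 1) * T j (t ++ [x])) ≤
      (1 / 2) ^ (j + 1) * T j t := fun j => by
    rw [Q.Q_const_mul t _ (by positivity)]
    exact mul_le_mul_of_nonneg_left (hT j t) (by positivity)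
  calc Q.Q t (fun x => mixture T (t ++ [x]))
      = Q.Q t (fun x => ∑ j ∈ Finset.range (t.length + 1), (1 / 2) ^ (j + 1) * T j (t ++ [x]))
          + (1 / 2) ^ (t.length + 1) := by simp only [hchild]; rw [Q.Q_add_const]
    _ ≤ ∑ j ∈ Finset.range (t.length + 1), (1 / 2) ^ (j + 1) * T j t
          + (1 / 2) ^ (t.length + 1) := by
        gcongr
        exact (Q.Q_sum_le t _ _).trans (Finset.sum_le_sum fun j _ => hterm j)
    _ = mixture T t := by
        rw [Finset.sum_range_succ, hT_start, mixture]; ring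

end Mixture

section Paths
omit [Fintype X] [Nonempty X]

@[simp]
lemma prefixList_length (ω : Path X) (k : ℕ) : (prefixList ω k).length = k := by
  simp [prefixList]

lemma prefixList_succ (ω : Path X) (k : ℕ) :
    prefixList ω (k + 1) = prefixList ω k ++ [ω k] := by
  simp [prefixList, List.range_succ]

lemma take_prefixList (ω : Path X) {k m : ℕ} (h : k ≤ m) :
    (prefixList ω m).take k = prefixList ω k := by
  simp [prefixList, ← List.map_take, List.take_range, inf_of_le_left h]

lemma mem_cyl_prefixList (ω : Path X) (k : ℕ) : ω ∈ cyl (prefixList ω k) := by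
  simp [cyl]

lemma cyl_anti {s t : List X} (h : s <+: t) : cyl t ⊆ cyl s := by
  intro ω (hω : prefixList ω t.length = t)
  show prefixList ω s.length = s
  rw [← take_prefixList ω h.length_le, hω, ← List.prefix_iff_eq_take.mp h]

lemma prefixList_length_of_prefix {b : List X} {ω : Path X} {k : ℕ}
    (h : b <+: prefixList ω k) : prefixList ω b.length = b := by
  have hb := List.prefix_iff_eq_take.mp h
  rwa [take_prefixList ω (by simpa using h.length_le), eq_comm] at hb

def descend (u : List X) (F : List X → X) : ℕ → List X
  | 0 => u
  | k + 1 => descend u F k ++ [F (descend u F k)]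

def descendPath (u : List X) (F : List X → X) : Path X := fun i =>
  if h : i < u.length then u[i] else F (descend u F (i - u.length))

lemma prefixList_descendPath (u : List X) (F : List X → X) (k : ℕ) :
    prefixList (descendPath u F) (u.length + k) = descend u F k := by
  induction k with
  | zero =>
    refine List.ext_getElem (by simp [descend]) fun i h _ => ?_
    have hi : i < u.length := by simpa using h
    simp [prefixList, descendPath, hi, descend]
  | succ k ih =>
    rw [← add_assoc, prefixList_succ, ih, descend]
    simp [descendPath]

lemma exists_mem_cyl_forall_le {M : List X → ℝ} (hM : ∀ u, ∃ x, M (u ++ [x]) ≤ M u) (t : List X) :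
    ∃ ω ∈ cyl t, ∀ k, M (prefixList ω (t.length + k)) ≤ M t := by
  choose F hF using hM
  refine ⟨descendPath t F, by simpa [cyl, descend] using prefixList_descendPath t F 0, fun k => ?_⟩
  rw [prefixList_descendPath]
  induction k with
  | zero => rfl
  | succ k ih => exact (hF _).trans ih

end Paths

def IsSuperhedge (Q : UpperExpTree X) (f : Path X → ℝ) (s : List X) (M : List X → ℝ) : Prop :=
  IsSupermart Q M ∧ (∃ B : ℝ, ∀ t, B ≤ M t) ∧
    ∀ ω ∈ cyl s, (f ω : EReal) ≤ liminf (fun k => ((M (prefixList ω k) : ℝ) : EReal)) atTop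

section Superhedge

variable {Q : UpperExpTree X} {f g : Path X → ℝ} {s t : List X} {M : List X → ℝ}

lemma gtG_le (h : IsSuperhedge Q f s M) : gtG Q f s ≤ M s :=
  sInf_le ⟨M, h.1, h.2.1, h.2.2, rfl⟩

lemma le_gtG {a : EReal} (h : ∀ M, IsSuperhedge Q f s M → a ≤ M s) : a ≤ gtG Q f s :=
  le_sInf fun _ ⟨M, h₁, h₂, h₃, hM⟩ => hM ▸ h M ⟨h₁, h₂, h₃⟩

lemma exists_isSuperhedge_lt {b : EReal} (h : gtG Q f s < b) :
    ∃ M, IsSuperhedge Q f s M ∧ (M s : EReal) < b := by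
  obtain ⟨_, ⟨M, h₁, h₂, h₃, rfl⟩, hb⟩ := sInf_lt_iff.mp h
  exact ⟨M, ⟨h₁, h₂, h₃⟩, hb⟩

lemma isSuperhedge_const (Q : UpperExpTree X) {C : ℝ} (h : ∀ ω ∈ cyl s, f ω ≤ C) :
    IsSuperhedge Q f s fun _ => C :=
  ⟨IsSupermart.const Q C, ⟨C, fun _ => le_rfl⟩, fun ω hω => by
    rw [liminf_const]; exact_mod_cast h ω hω⟩

namespace IsSuperhedge

lemma mono (hfg : ∀ ω ∈ cyl s, f ω ≤ g ω) (h : IsSuperhedge Q g s M) : IsSuperhedge Q f s M :=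
  ⟨h.1, h.2.1, fun ω hω => (EReal.coe_le_coe_iff.mpr (hfg ω hω)).trans (h.2.2 ω hω)⟩

lemma of_prefix (hst : s <+: t) (h : IsSuperhedge Q f s M) : IsSuperhedge Q f t M :=
  ⟨h.1, h.2.1, fun ω hω => h.2.2 ω (cyl_anti hst hω)⟩

/-- Were `M t < A`, the path of `exists_mem_cyl_forall_le` would keep the capital below `A`,
while `f ≥ A` on it. -/
lemma le_apply {A : ℝ} (h : IsSuperhedge Q f s M) (hA : ∀ ω ∈ cyl s, A ≤ f ω)
    (hst : s <+: t) : A ≤ M t := by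
  obtain ⟨ω, hωt, hle⟩ := exists_mem_cyl_forall_le h.1.exists_child_le t
  have hliminf : liminf (fun k => ((M (prefixList ω k) : ℝ) : EReal)) atTop ≤ M t :=
    liminf_le_of_frequently_le' <| frequently_atTop.mpr fun K =>
      ⟨t.length + K, by omega, by exact_mod_cast hle K⟩
  have hωs := cyl_anti hst hωt
  exact_mod_cast (EReal.coe_le_coe_iff.mpr (hA ω hωs)).trans ((h.2.2 ω hωs).trans hliminf)

end IsSuperhedge

lemma gtG_le_of_le {C : ℝ} (h : ∀ ω ∈ cyl s, f ω ≤ C) : gtG Q f s ≤ C :=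
  gtG_le (isSuperhedge_const Q h)

lemma le_gtG_of_le {A : ℝ} (h : ∀ ω ∈ cyl s, A ≤ f ω) : (A : EReal) ≤ gtG Q f s :=
  le_gtG fun _ hM => EReal.coe_le_coe_iff.mpr (hM.le_apply h List.prefix_rfl)

lemma gtG_mono (h : ∀ ω ∈ cyl s, f ω ≤ g ω) : gtG Q f s ≤ gtG Q g s :=
  le_gtG fun _ hM => gtG_le (hM.mono h)

end Superhedge

/-- `Ē(f|t)` as a real number: meaningful for bounded `f`, for which it is finite. -/
noncomputable def condUE (Q : UpperExpTree X) (f : Path X → ℝ) (t : List X) : ℝ :=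
  (gtG Q f t).toReal

section CondUE

variable {Q : UpperExpTree X} {f g : Path X → ℝ} {A C : ℝ}

lemma coe_condUE (hA : ∀ ω, A ≤ f ω) (hC : ∀ ω, f ω ≤ C) (t : List X) :
    (condUE Q f t : EReal) = gtG Q f t :=
  EReal.coe_toReal (ne_top_of_le_ne_top (EReal.coe_ne_top C) (gtG_le_of_le fun ω _ => hC ω))
    (ne_bot_of_le_ne_bot (EReal.coe_ne_bot A) (le_gtG_of_le fun ω _ => hA ω))

lemma le_condUE (hA : ∀ ω, A ≤ f ω) (hC : ∀ ω, f ω ≤ C) (t : List X) : A ≤ condUE Q f t := by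
  have := le_gtG_of_le (Q := Q) (s := t) fun ω _ => hA ω
  rwa [← coe_condUE hA hC, EReal.coe_le_coe_iff] at this

lemma condUE_le (hA : ∀ ω, A ≤ f ω) (hC : ∀ ω, f ω ≤ C) (t : List X) : condUE Q f t ≤ C := by
  have := gtG_le_of_le (Q := Q) (s := t) fun ω _ => hC ω
  rwa [← coe_condUE hA hC, EReal.coe_le_coe_iff] at this

lemma condUE_mono (hA : ∀ ω, A ≤ f ω) (hC : ∀ ω, g ω ≤ C) (hfg : f ≤ g) (t : List X) :
    condUE Q f t ≤ condUE Q g t := by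
  have hf := gtG_mono (Q := Q) (s := t) fun ω _ => hfg ω
  rwa [← coe_condUE hA fun ω => (hfg ω).trans (hC ω),
    ← coe_condUE (fun ω => (hA ω).trans (hfg ω)) hC, EReal.coe_le_coe_iff] at hf

lemma exists_isSuperhedge_le_condUE_add (hA : ∀ ω, A ≤ f ω) (hC : ∀ ω, f ω ≤ C) {δ : ℝ}
    (hδ : 0 < δ) (t : List X) : ∃ M, IsSuperhedge Q f t M ∧ M t ≤ condUE Q f t + δ := by
  obtain ⟨M, hM, hMt⟩ := exists_isSuperhedge_lt (Q := Q) (f := f) (s := t)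
    (b := (condUE Q f t + δ : ℝ))
    (by rw [← coe_condUE hA hC]; exact_mod_cast lt_add_of_pos_right _ hδ)
  exact ⟨M, hM, by exact_mod_cast hMt.le⟩

/-- A capital process that superhedges `f` from `t` also does so from every child of `t`. -/
lemma isSupermart_condUE (hA : ∀ ω, A ≤ f ω) (hC : ∀ ω, f ω ≤ C) :
    IsSupermart Q (condUE Q f) := by
  intro t
  refine le_of_forall_pos_le_add fun δ hδ => ?_
  obtain ⟨M, hM, hMt⟩ := exists_isSuperhedge_le_condUE_add hA hC hδ t
  have hchild : ∀ x, condUE Q f (t ++ [x]) ≤ M (t ++ [x]) := fun x => by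
    rw [← EReal.coe_le_coe_iff, coe_condUE hA hC]
    exact gtG_le (hM.of_prefix (t.prefix_append [x]))
  calc Q.Q t (fun x => condUE Q f (t ++ [x])) ≤ Q.Q t (fun x => M (t ++ [x])) := Q.Q_mono t hchild
    _ ≤ M t := hM.1 t
    _ ≤ condUE Q f t + δ := hMt

end CondUE

section Upcrossing
omit [Fintype X] [Nonempty X]

lemma exists_ge_eq_of_stable {α : Type*} {σ : ℕ → α} {p : ℕ → Prop} {k : ℕ}
    (hp : ∃ m ≥ k, p m) (hstay : ∀ m, σ m = σ k → ¬ p m → σ (m + 1) = σ k) :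
    ∃ m ≥ k, p m ∧ σ m = σ k := by
  classical
  obtain ⟨hkm, hpm⟩ := Nat.find_spec hp
  have hstable : ∀ i, k + i ≤ Nat.find hp → σ (k + i) = σ k := by
    intro i
    induction i with
    | zero => simp
    | succ i ih =>
      intro hi
      have hnot := Nat.find_min hp (show k + i < Nat.find hp by omega)
      rw [← add_assoc]
      exact hstay _ (ih (by omega)) fun h => hnot ⟨by omega, h⟩
  refine ⟨Nat.find hp, hkm, hpm, ?_⟩
  simpa [Nat.add_sub_cancel' hkm] using hstable (Nat.find hp - k) (by omega)

lemma tendsto_atTop_of_monotone_of_exists_add_le {u : ℕ → ℝ} {δ : ℝ} (hu : Monotone u)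
    (hδ : 0 < δ) (h : ∀ k, ∃ m, u k + δ ≤ u m) : Tendsto u atTop atTop := by
  have hjump : ∀ j : ℕ, ∃ m, u 0 + j * δ ≤ u m := by
    intro j
    induction j with
    | zero => exact ⟨0, by simp⟩
    | succ j ih =>
      obtain ⟨m, hm⟩ := ih
      obtain ⟨m', hm'⟩ := h m
      exact ⟨m', by push_cast; linarith⟩
  refine tendsto_atTop_atTop_of_monotone hu fun b => ?_
  obtain ⟨j, hj⟩ := exists_nat_ge ((b - u 0) / δ)
  obtain ⟨m, hm⟩ := hjump j
  exact ⟨m, by rw [div_le_iff₀ hδ] at hj; linarith⟩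

/-- Waiting with cash `c`, or holding cash `c` and the capital process `W b` bought at node `b`. -/
inductive TradeState (X : Type) where
  | wait (c : ℝ)
  | hold (c : ℝ) (b : List X)

namespace TradeState

variable (e : List X → ℝ) (W : List X → List X → ℝ) (r η : ℝ)

noncomputable def step (t : List X) : TradeState X → TradeState X
  | wait c => if e t < r - η then hold (c - (e t + η / 4)) t else wait c
  | hold c b => if r - η / 2 ≤ W b t then wait (c + W b t) else hold c b

def value (t : List X) : TradeState X → ℝ
  | wait c => c
  | hold c b => c + W b t

/-- A held position is valued at `r - 3η/4`: above its purchase price `e t + η/4 < r - 3η/4`,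
and at least `η/4` below its sale value. -/
noncomputable def potential : TradeState X → ℝ
  | wait c => c
  | hold c _ => c + r - 3 * η / 4

def Inv (t : List X) : TradeState X → Prop
  | wait c => r ≤ c
  | hold c b => η / 2 ≤ c ∧ b <+: t

variable {e W r η}

lemma inv_step (hη : 0 < η) {t : List X} {σ : TradeState X} (h : σ.Inv r η t) (x : X) :
    (σ.step e W r η t).Inv r η (t ++ [x]) := by
  cases σ with
  | wait c =>
    by_cases hdip : e t < r - η
    · simp only [step, if_pos hdip, Inv]
      exact ⟨by linarith [show r ≤ c from h], t.prefix_append [x]⟩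
    · simpa only [step, if_neg hdip, Inv] using h
  | hold c b =>
    obtain ⟨hc, hb⟩ := h
    by_cases hsell : r - η / 2 ≤ W b t
    · simp only [step, if_pos hsell, Inv]; linarith
    · simp only [step, if_neg hsell, Inv]; exact ⟨hc, hb.trans (t.prefix_append [x])⟩

lemma potential_le_step (hη : 0 ≤ η) (t : List X) (σ : TradeState X) :
    σ.potential r η ≤ (σ.step e W r η t).potential r η := by
  cases σ with
  | wait c =>
    by_cases hdip : e t < r - η
    · simp only [step, if_pos hdip, potential]; linarith
    · simp only [step, if_neg hdip, le_refl]
  | hold c b =>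
    by_cases hsell : r - η / 2 ≤ W b t
    · simp only [step, if_pos hsell, potential]; linarith
    · simp only [step, if_neg hsell, le_refl]

lemma potential_sub_le_value (hr : 0 ≤ r) (hη : 0 ≤ η) (hW : ∀ b t, b <+: t → 0 ≤ W b t)
    {t : List X} {σ : TradeState X} (h : σ.Inv r η t) : σ.potential r η - r ≤ σ.value W t := by
  cases σ with
  | wait c => simp only [potential, value]; linarith
  | hold c b => simp only [potential, value]; linarith [hW b t h.2]

end TradeState

open TradeState

noncomputable def tradeState (e : List X → ℝ) (W : List X → List X → ℝ) (r η : ℝ)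
    (t : List X) : TradeState X :=
  if t = [] then wait r else (tradeState e W r η t.dropLast).step e W r η t.dropLast
termination_by t.length
decreasing_by simp_all [List.length_dropLast]; exact List.length_pos_of_ne_nil ‹_›

noncomputable def tradeCapital (e : List X → ℝ) (W : List X → List X → ℝ) (r η : ℝ)
    (t : List X) : ℝ :=
  (tradeState e W r η t).value W t

variable {e : List X → ℝ} {W : List X → List X → ℝ} {r η : ℝ}

lemma tradeState_nil : tradeState e W r η [] = wait r := by
  rw [tradeState, if_pos rfl]

lemma tradeState_append_singleton (t : List X) (x : X) :
    tradeState e W r η (t ++ [x]) = (tradeState e W r η t).step e W r η t := by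
  rw [tradeState, if_neg (by simp), List.dropLast_concat]

lemma inv_tradeState (hη : 0 < η) (t : List X) : (tradeState e W r η t).Inv r η t := by
  induction t using List.reverseRecOn with
  | nil => rw [tradeState_nil]; exact le_rfl
  | append_singleton t x ih => rw [tradeState_append_singleton]; exact inv_step hη ih x

lemma tradeState_eq_wait {d : ℕ} (he : ∀ u : List X, u.length < d → r - η ≤ e u) {t : List X}
    (ht : t.length ≤ d) : tradeState e W r η t = wait r := by
  induction t using List.reverseRecOn with
  | nil => exact tradeState_nil
  | append_singleton t x ih =>
    simp only [List.length_append, List.length_singleton] at ht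
    rw [tradeState_append_singleton, ih (by omega), step, if_neg (not_lt.mpr (he t (by omega)))]

lemma tradeCapital_nonneg (hr : 0 ≤ r) (hη : 0 < η) (hW : ∀ b t, b <+: t → 0 ≤ W b t)
    (t : List X) : 0 ≤ tradeCapital e W r η t := by
  have h := inv_tradeState (e := e) (W := W) (r := r) hη t
  unfold tradeCapital
  rcases hσ : tradeState e W r η t with c | ⟨c, b⟩ <;> rw [hσ] at h <;> simp only [value]
  · exact hr.trans h
  · exact add_nonneg (by linarith [h.1]) (hW b t h.2)

/-- The strategy completes infinitely many round trips, each raising the potential by at least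
`η / 4`. -/
lemma tendsto_tradeCapital_atTop (hr : 0 ≤ r) (hη : 0 < η) (hW : ∀ b t, b <+: t → 0 ≤ W b t)
    (ω : Path X) (hdip : ∃ᶠ k in atTop, e (prefixList ω k) < r - η)
    (hsell : ∀ m, ∃ᶠ k in atTop, r - η / 2 ≤ W (prefixList ω m) (prefixList ω k)) :
    Tendsto (fun k => tradeCapital e W r η (prefixList ω k)) atTop atTop := by
  set σ : ℕ → TradeState X := fun k => tradeState e W r η (prefixList ω k) with hσ_def
  have hσ : ∀ k, σ (k + 1) = (σ k).step e W r η (prefixList ω k) := fun k => by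
    simp only [hσ_def, prefixList_succ, tradeState_append_singleton]
  have hinv : ∀ k, (σ k).Inv r η (prefixList ω k) := fun k => inv_tradeState hη _
  have hmono : Monotone fun k => (σ k).potential r η :=
    monotone_nat_of_le_succ fun k => (hσ k).symm ▸ potential_le_step hη.le _ _
  have hhold : ∀ k, ∃ m ≥ k, ∃ c b, σ m = hold c b := by
    intro k
    cases hk : σ k with
    | hold c b => exact ⟨k, le_rfl, c, b, hk⟩
    | wait c =>
      obtain ⟨m, hkm, hdip_m, hm⟩ := exists_ge_eq_of_stable (σ := σ)
        (frequently_atTop.mp hdip k) fun m hm hnot => by rw [hσ, hm, hk, step, if_neg hnot]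
      refine ⟨m + 1, by omega, c - (e (prefixList ω m) + η / 4), prefixList ω m, ?_⟩
      rw [hσ, hm, hk, step, if_pos hdip_m]
  have hgain : ∀ k, ∃ m, (σ k).potential r η + η / 4 ≤ (σ m).potential r η := by
    intro k
    obtain ⟨m, hkm, c, b, hm⟩ := hhold k
    have hb : prefixList ω b.length = b := by
      have := hinv m; rw [hm] at this; exact prefixList_length_of_prefix this.2
    obtain ⟨m', hmm', hsell', hm'⟩ := exists_ge_eq_of_stable (σ := σ)
      (frequently_atTop.mp (hb ▸ hsell b.length) m)
      fun i hi hnot => by rw [hσ, hi, hm, step, if_neg hnot]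
    refine ⟨m' + 1, ?_⟩
    have hstep : (σ m').potential r η + η / 4 ≤ (σ (m' + 1)).potential r η := by
      rw [hσ, hm', hm, step, if_pos hsell']
      simp only [potential]; linarith
    linarith [hmono hkm, congrArg (potential r η) hm']
  refine tendsto_atTop_mono (fun k => potential_sub_le_value hr hη.le hW (hinv k)) ?_
  exact tendsto_atTop_add_const_right _ (-r)
    (tendsto_atTop_of_monotone_of_exists_add_le hmono (by positivity) hgain)

end Upcrossing

open TradeState in
lemma isSupermart_tradeCapital {Q : UpperExpTree X} {e : List X → ℝ} {W : List X → List X → ℝ}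
    {r η : ℝ} (hW : ∀ b, IsSupermart Q (W b))
    (hprice : ∀ t, e t < r - η → W t t ≤ e t + η / 4) :
    IsSupermart Q (tradeCapital e W r η) := by
  intro t
  simp only [tradeCapital, tradeState_append_singleton]
  cases tradeState e W r η t with
  | wait c =>
    by_cases hdip : e t < r - η
    · simp only [step, if_pos hdip, value]
      rw [show (fun x => c - (e t + η / 4) + W t (t ++ [x])) =
        fun x => W t (t ++ [x]) + (c - (e t + η / 4)) by ext; ring, Q.Q_add_const]
      linarith [hW t t, hprice t hdip]
    · simp only [step, if_neg hdip, value, Q.Q_const, le_refl]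
  | hold c b =>
    by_cases hsell : r - η / 2 ≤ W b t
    · simp only [step, if_pos hsell, value, Q.Q_const, le_refl]
    · simp only [step, if_neg hsell, value]
      rw [show (fun x => c + W b (t ++ [x])) = fun x => W b (t ++ [x]) + c by ext; ring,
        Q.Q_add_const]
      linarith [hW b t]

/-- Shifting by `A` makes the bought capital processes nonnegative; the mask on `e` keeps the
strategy from buying before depth `d`. -/
noncomputable def upcrossingTest (e : List X → ℝ) (W : List X → List X → ℝ) (A r η : ℝ) (d : ℕ)
    (t : List X) : ℝ :=
  r⁻¹ * tradeCapital (fun u => if d ≤ u.length then e u - A else r) (fun b u => W b u - A) r η t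

section UpcrossingTest

variable {e : List X → ℝ} {W : List X → List X → ℝ} {A r η : ℝ} {d : ℕ}

lemma isSupermart_upcrossingTest {Q : UpperExpTree X} (hr : 0 ≤ r) (hη : 0 ≤ η)
    (hW : ∀ b, IsSupermart Q (W b)) (hprice : ∀ t, W t t ≤ e t + η / 4) :
    IsSupermart Q (upcrossingTest e W A r η d) := by
  refine IsSupermart.const_mul (isSupermart_tradeCapital (fun b => ?_) fun t ht => ?_)
    (inv_nonneg.mpr hr)
  · simpa only [sub_eq_add_neg] using (hW b).add_const (-A)
  · have hd : d ≤ t.length := by by_contra h; simp [h] at ht; linarith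
    simp only [if_pos hd]
    linarith [hprice t]

omit [Fintype X] [Nonempty X]

lemma upcrossingTest_nonneg (hr : 0 ≤ r) (hη : 0 < η) (hW : ∀ b t, b <+: t → A ≤ W b t)
    (t : List X) : 0 ≤ upcrossingTest e W A r η d t :=
  mul_nonneg (inv_nonneg.mpr hr) (tradeCapital_nonneg hr hη (fun b t h => by linarith [hW b t h]) t)

lemma upcrossingTest_eq_one (hr : 0 < r) (hη : 0 ≤ η) {t : List X} (ht : t.length ≤ d) :
    upcrossingTest e W A r η d t = 1 := by
  rw [upcrossingTest, tradeCapital, tradeState_eq_wait (d := d) (fun u hu => ?_) ht]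
  · exact inv_mul_cancel₀ hr.ne'
  · simp only [if_neg (not_le.mpr hu)]; linarith

lemma tendsto_upcrossingTest_atTop (hr : 0 < r) (hη : 0 < η) (hW : ∀ b t, b <+: t → A ≤ W b t)
    (ω : Path X) (hdip : ∃ᶠ k in atTop, e (prefixList ω k) < A + r - η)
    (hsell : ∀ m, ∃ᶠ k in atTop, A + r - η / 2 ≤ W (prefixList ω m) (prefixList ω k)) :
    Tendsto (fun k => upcrossingTest e W A r η d (prefixList ω k)) atTop atTop := by
  refine (tendsto_tradeCapital_atTop hr.le hη (fun b t h => by linarith [hW b t h]) ω ?_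
    fun m => (hsell m).mono fun k hk => by linarith).const_mul_atTop (inv_pos.mpr hr)
  refine (hdip.and_eventually (eventually_ge_atTop d)).mono fun k ⟨hk, hdk⟩ => ?_
  simp only [prefixList_length, if_pos hdk]
  linarith

end UpcrossingTest

lemma tendsto_upcrossingTest_of_liminf_lt {Q : UpperExpTree X} {f : Path X → ℝ}
    {e : List X → ℝ} {W : List X → List X → ℝ} {A r η : ℝ} {d : ℕ} (hr : 0 < r) (hη : 0 < η)
    (hWA : ∀ b t, b <+: t → A ≤ W b t) (hW : ∀ b, IsSuperhedge Q f b (W b)) (ω : Path X)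
    (hdip : liminf (fun k => (e (prefixList ω k) : EReal)) atTop < ((A + r - η : ℝ) : EReal))
    (hsell : A + r ≤ f ω) :
    Tendsto (fun k => upcrossingTest e W A r η d (prefixList ω k)) atTop atTop := by
  refine tendsto_upcrossingTest_atTop hr hη hWA ω
    ((frequently_lt_of_liminf_lt (by isBoundedDefault) hdip).mono fun k hk => ?_) fun m => ?_
  · exact EReal.coe_lt_coe_iff.mp hk
  · have hlevel : ((A + r - η / 2 : ℝ) : EReal) < f ω := by
      exact_mod_cast (show A + r - η / 2 < f ω by linarith)
    exact (eventually_lt_of_lt_liminf (hlevel.trans_le ((hW _).2.2 ω (mem_cyl_prefixList ω m)))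
      (by isBoundedDefault)).frequently.mono fun k hk => (EReal.coe_lt_coe_iff.mp hk).le

omit [Fintype X] [Nonempty X] in
lemma tendsto_mixture_atTop {T : ℕ → List X → ℝ} (hT : ∀ j t, 0 ≤ T j t) {ω : Path X} {j : ℕ}
    (h : Tendsto (fun k => T j (prefixList ω k)) atTop atTop) :
    Tendsto (fun k => mixture T (prefixList ω k)) atTop atTop := by
  refine tendsto_atTop_mono' _ ?_
    (h.const_mul_atTop (show (0 : ℝ) < (1 / 2) ^ (j + 1) by positivity))
  filter_upwards [eventually_gt_atTop j] with k hk
  exact mul_le_mixture hT (by simpa using hk)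

lemma exists_upcrossing_tests (Q : UpperExpTree X) {g : ℕ → Path X → ℝ} {A C : ℝ}
    (hA : ∀ n ω, A ≤ g n ω) (hC : ∀ n ω, g n ω ≤ C) (d : ℕ) :
    ∃ T : ℕ → List X → ℝ, (∀ j, IsSupermart Q (T j)) ∧ (∀ j t, 0 ≤ T j t) ∧
      (∀ j t, t.length ≤ d + j → T j t = 1) ∧
      ∀ n ω, liminf (fun k => (condUE Q (g n) (prefixList ω k) : EReal)) atTop < g n ω →
        ∃ j, Tendsto (fun k => T j (prefixList ω k)) atTop atTop := by
  have : Nonempty {p : ℕ × ℚ × ℚ // 0 < p.2.1 ∧ 0 < p.2.2} := ⟨⟨(0, 1, 1), by norm_num⟩⟩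
  obtain ⟨π, hπ⟩ := exists_surjective_nat {p : ℕ × ℚ × ℚ // 0 < p.2.1 ∧ 0 < p.2.2}
  choose W hW using fun (p : {p : ℕ × ℚ × ℚ // 0 < p.2.1 ∧ 0 < p.2.2}) =>
    exists_isSuperhedge_le_condUE_add (hA p.1.1) (hC p.1.1)
      (show (0 : ℝ) < p.1.2.2 / 4 by have := p.2.2; positivity)
  have hWA : ∀ p b t, b <+: t → A ≤ W p b t := fun p b _ hbt =>
    (hW p b).1.le_apply (fun ω _ => hA _ ω) hbt
  refine ⟨fun j => upcrossingTest (condUE Q (g (π j).1.1)) (W (π j)) A (π j).1.2.1 (π j).1.2.2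
      (d + j), fun j => ?_, fun j => ?_, fun j t ht => ?_, fun n ω hlt => ?_⟩
  · exact isSupermart_upcrossingTest (by exact_mod_cast (π j).2.1.le)
      (by exact_mod_cast (π j).2.2.le)
      (fun b => (hW _ b).1.1) fun t => (hW _ t).2
  · exact upcrossingTest_nonneg (by exact_mod_cast (π j).2.1.le)
      (by exact_mod_cast (π j).2.2) (hWA _)
  · exact upcrossingTest_eq_one (by exact_mod_cast (π j).2.1) (by exact_mod_cast (π j).2.2.le) ht
  set L := liminf (fun k => (condUE Q (g n) (prefixList ω k) : EReal)) atTop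
  have hAL : (A : EReal) ≤ L := le_liminf_of_le (h := Eventually.of_forall fun k =>
    EReal.coe_le_coe_iff.mpr (le_condUE (hA n) (hC n) _))
  lift L to ℝ using ⟨hlt.ne_top, ne_bot_of_le_ne_bot (EReal.coe_ne_bot A) hAL⟩ with x hx
  have hAx : A ≤ x := by exact_mod_cast hAL
  have hxg : x < g n ω := by exact_mod_cast hlt
  obtain ⟨q₁, hxq₁, hq₁⟩ := exists_rat_btwn (show x - A < g n ω - A by linarith)
  obtain ⟨q₂, hq₁₂, hq₂⟩ := exists_rat_btwn hq₁
  have hp : (0 : ℚ) < q₂ ∧ 0 < q₂ - q₁ :=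
    ⟨by exact_mod_cast (show (0 : ℝ) < q₂ by linarith),
      by exact_mod_cast (show (0 : ℝ) < q₂ - q₁ by linarith)⟩
  obtain ⟨j, hj⟩ := hπ ⟨(n, q₂, q₂ - q₁), hp⟩
  refine ⟨j, ?_⟩
  rw [hj]
  refine tendsto_upcrossingTest_of_liminf_lt (by push_cast; linarith) (by push_cast; linarith)
    (hWA _) (fun b => (hW _ b).1) ω ?_ (by push_cast; linarith)
  show L < ((A + q₂ - ((q₂ - q₁ : ℚ) : ℝ) : ℝ) : EReal)
  rw [← hx]
  exact_mod_cast (show x < A + q₂ - (q₂ - q₁) by linarith)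

section SupCondUE

variable {Q : UpperExpTree X} {g : ℕ → Path X → ℝ} {A C : ℝ}

lemma bddAbove_range_condUE (hA : ∀ n ω, A ≤ g n ω) (hC : ∀ n ω, g n ω ≤ C) (t : List X) :
    BddAbove (Set.range fun n => condUE Q (g n) t) :=
  ⟨C, by rintro _ ⟨n, rfl⟩; exact condUE_le (hA n) (hC n) t⟩

lemma isSupermart_iSup_condUE (hA : ∀ n ω, A ≤ g n ω) (hC : ∀ n ω, g n ω ≤ C)
    (hmono : Monotone g) : IsSupermart Q fun t => ⨆ n, condUE Q (g n) t :=
  IsSupermart.ciSup (fun n => isSupermart_condUE (hA n) (hC n))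
    (fun t n m h => condUE_mono (hA n) (hC m) (hmono h) t) (bddAbove_range_condUE hA hC)

lemma coe_iSup_condUE (hA : ∀ n ω, A ≤ g n ω) (hC : ∀ n ω, g n ω ≤ C) (t : List X) :
    ((⨆ n, condUE Q (g n) t : ℝ) : EReal) = ⨆ n, gtG Q (g n) t := by
  rw [Monotone.map_ciSup_of_continuousAt continuous_coe_real_ereal.continuousAt
    EReal.coe_strictMono.monotone (bddAbove_range_condUE hA hC t)]
  simp only [coe_condUE (hA _) (hC _)]

end SupCondUE

theorem gtG_le_iSup_gtG (Q : UpperExpTree X) {g : ℕ → Path X → ℝ} {G : Path X → ℝ} {A C : ℝ}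
    (hA : ∀ n ω, A ≤ g n ω) (hC : ∀ n ω, g n ω ≤ C) (hmono : Monotone g)
    (hG : ∀ ω, (G ω : EReal) ≤ ⨆ n, (g n ω : EReal)) (s : List X) :
    gtG Q G s ≤ ⨆ n, gtG Q (g n) s := by
  set E : List X → ℝ := fun t => ⨆ n, condUE Q (g n) t
  have hAE : ∀ t, A ≤ E t := fun t =>
    (le_condUE (hA 0) (hC 0) t).trans (le_ciSup (bddAbove_range_condUE hA hC t) 0)
  obtain ⟨T, hT_super, hT_nonneg, hT_one, hT_tendsto⟩ :=
    exists_upcrossing_tests Q hA hC s.length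
  rw [← coe_iSup_condUE hA hC s, ← EReal.le_of_forall_lt_iff_le]
  intro z hz
  set ε := z - E s
  have hε : 0 < ε := sub_pos.mpr (EReal.coe_lt_coe_iff.mp hz)
  set M : List X → ℝ := fun t => E t + ε * mixture T t
  have hM_super : IsSupermart Q M := (isSupermart_iSup_condUE hA hC hmono).add <|
    (isSupermart_mixture hT_super fun t => hT_one _ t (by omega)).const_mul hε.le
  have hM_lb : ∀ t, A ≤ M t := fun t =>
    le_add_of_le_of_nonneg (hAE t) (mul_nonneg hε.le (mixture_nonneg hT_nonneg t))
  have hM_dom : ∀ ω n, (g n ω : EReal) ≤ liminf (fun k => (M (prefixList ω k) : EReal)) atTop := by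
    intro ω n
    by_cases hconv :
        (g n ω : EReal) ≤ liminf (fun k => (condUE Q (g n) (prefixList ω k) : EReal)) atTop
    · refine hconv.trans (liminf_le_liminf (Eventually.of_forall fun k => ?_))
      exact EReal.coe_le_coe_iff.mpr <| (le_ciSup (bddAbove_range_condUE hA hC _) n).trans
        (le_add_of_nonneg_right (mul_nonneg hε.le (mixture_nonneg hT_nonneg _)))
    · obtain ⟨j, hj⟩ := hT_tendsto n ω (not_le.mp hconv)
      have hM : Tendsto (fun k => M (prefixList ω k)) atTop atTop :=
        tendsto_atTop_add_left_of_le' _ A (Eventually.of_forall fun k => hAE _)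
          ((tendsto_mixture_atTop hT_nonneg hj).const_mul_atTop hε)
      rw [(EReal.tendsto_coe_nhds_top_iff.mpr hM).liminf_eq]
      exact le_top
  have hM : IsSuperhedge Q G s M :=
    ⟨hM_super, ⟨A, hM_lb⟩, fun ω _ => (hG ω).trans (iSup_le (hM_dom ω))⟩
  calc gtG Q G s ≤ M s := gtG_le hM
    _ = z := by
      have hmix : mixture T s = 1 := mixture_eq_one fun j _ => hT_one j s (by omega)
      simp only [M, hmix, mul_one, ε, add_sub_cancel]

lemma coe_toReal_inf_coe {x : EReal} {B : ℝ} (hB : (B : EReal) ≤ x) (c : ℝ) :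
    (((x ⊓ c).toReal : ℝ) : EReal) = x ⊓ c :=
  EReal.coe_toReal (ne_top_of_le_ne_top (EReal.coe_ne_top c) inf_le_right)
    (ne_bot_of_le_ne_bot (EReal.coe_ne_bot (min B c)) (le_inf
      ((EReal.coe_le_coe_iff.mpr (min_le_left B c)).trans hB)
      (EReal.coe_le_coe_iff.mpr (min_le_right B c))))

section BoundedBelow

variable {Q : UpperExpTree X} {s : List X}

lemma gtBB_mono {h₁ h₂ : Path X → EReal} {B : ℝ} (hB : ∀ ω, (B : EReal) ≤ h₁ ω) (hle : h₁ ≤ h₂) :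
    gtBB Q h₁ s ≤ gtBB Q h₂ s :=
  iSup_mono fun c => gtG_mono fun ω _ => by
    rw [← EReal.coe_le_coe_iff, coe_toReal_inf_coe (hB ω),
      coe_toReal_inf_coe ((hB ω).trans (hle ω))]
    exact inf_le_inf_right _ (hle ω)

lemma gtUE_eq_gtBB {h : Path X → EReal} {B : ℝ} (hB : ∀ ω, (B : EReal) ≤ h ω) :
    gtUE Q h s = gtBB Q h s := by
  refine le_antisymm ?_ (le_iInf fun c => gtBB_mono hB fun ω => le_sup_left)
  have hsup : (fun ω => h ω ⊔ ((B : ℝ) : EReal)) = h := funext fun ω => sup_eq_left.mpr (hB ω)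
  calc gtUE Q h s ≤ gtBB Q (fun ω => h ω ⊔ ((B : ℝ) : EReal)) s := iInf_le _ B
    _ = gtBB Q h s := by rw [hsup]

lemma gtBB_le_iSup_gtBB {fn : ℕ → Path X → EReal} {f : Path X → EReal} {B : ℝ}
    (hB : ∀ n ω, (B : EReal) ≤ fn n ω) (hmono : Monotone fn) (hf : ∀ ω, f ω = ⨆ n, fn n ω) :
    gtBB Q f s ≤ ⨆ n, gtBB Q (fn n) s := by
  have hfB : ∀ ω, (B : EReal) ≤ f ω := fun ω => (hB 0 ω).trans (hf ω ▸ le_iSup (fn · ω) 0)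
  refine iSup_le fun c => (gtG_le_iSup_gtG Q (A := min B c) (C := c) (fun n ω => ?_)
    (fun n ω => ?_) (fun n m h ω => ?_) (fun ω => ?_) s).trans
    (iSup_mono fun n => le_iSup_of_le c le_rfl)
  · rw [← EReal.coe_le_coe_iff, coe_toReal_inf_coe (hB n ω)]
    exact le_inf ((EReal.coe_le_coe_iff.mpr (min_le_left B c)).trans (hB n ω))
      (EReal.coe_le_coe_iff.mpr (min_le_right B c))
  · rw [← EReal.coe_le_coe_iff, coe_toReal_inf_coe (hB n ω)]
    exact inf_le_right
  · rw [← EReal.coe_le_coe_iff, coe_toReal_inf_coe (hB n ω), coe_toReal_inf_coe (hB m ω)]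
    exact inf_le_inf_right _ (hmono h ω)
  · rw [coe_toReal_inf_coe (hfB ω), hf ω, iSup_inf_eq]
    simp only [coe_toReal_inf_coe (hB _ ω), le_refl]

end BoundedBelow

end

theorem stmt3 (Q : UpperExpTree X) (s : List X)
    (fn : ℕ → Path X → EReal) (f : Path X → EReal)
    (hmono : Monotone fn)
    (hbb : ∀ n, ∃ B : ℝ, ∀ ω, (B : EReal) ≤ fn n ω)
    (hlim : ∀ ω, f ω = ⨆ n, fn n ω) :
    Tendsto (fun n => gtUE Q (fn n) s) atTop (nhds (gtUE Q f s)) := by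
  obtain ⟨B, hB⟩ := hbb 0
  have hfnB : ∀ n ω, (B : EReal) ≤ fn n ω := fun n ω => (hB ω).trans (hmono n.zero_le ω)
  have hfn_le : ∀ n, fn n ≤ f := fun n ω => hlim ω ▸ le_iSup (fn · ω) n
  have hfB : ∀ ω, (B : EReal) ≤ f ω := fun ω => (hfnB 0 ω).trans (hfn_le 0 ω)
  simp only [gtUE_eq_gtBB (hfnB _), gtUE_eq_gtBB hfB]
  have hmono' : Monotone fun n => gtBB Q (fn n) s := fun n m h => gtBB_mono (hfnB n) (hmono h)
  rw [le_antisymm (gtBB_le_iSup_gtBB hfnB hmono hlim)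
    (iSup_le fun n => gtBB_mono (hfnB n) (hfn_le n))]
  exact tendsto_atTop_iSup hmono'

end UEPaper
end

section
/- For every imprecise probability tree 𝒫, every situation s, and every pointwise non-increasing sequence (f_n) of finitary gambles with pointwise limit f = inf_n f_n, one has lim_{n→∞} Ē_𝒫(f_n|s) = Ē_𝒫(f|s). -/
/-!
For a finitary gamble `g`, the upper integral of `g` under a compatible precise tree is a finite
sum of cylinder probabilities, hence a continuous function of the selection `q` of local mass
functions; these selections form the compact product of the credal sets. So `Ē_𝒫(fₙ|s)` is the
supremum of a continuous function `Fₙ` on a compact set, and `Fₙ` decreases with `n`. The sets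
`{q | Fₙ q ≥ lim Ē_𝒫(fₙ|s)}` are then nonempty, closed and nested, so some `q` lies in all of them,
and monotone convergence under `q` gives `lim Ē_𝒫(fₙ|s) ≤ E_q(f|s) ≤ Ē_𝒫(f|s)`.
-/

open Filter MeasureTheory Topology
open scoped ENNReal

theorem IsCompact.iInf_iSup_eq_iSup_iInf_of_antitone {α β : Type*} [TopologicalSpace α]
    [CompleteLinearOrder β] {K : Set α} (hK : IsCompact K) {F : ℕ → α → β}
    (hF : ∀ n, UpperSemicontinuous (F n)) (hanti : ∀ x ∈ K, Antitone fun n => F n x) :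
    ⨅ n, ⨆ x ∈ K, F n x = ⨆ x ∈ K, ⨅ n, F n x := by
  refine le_antisymm ?_ (iSup₂_le fun x hx =>
    iInf_mono fun n => le_iSup₂ (f := fun x _ => F n x) x hx)
  rcases K.eq_empty_or_nonempty with rfl | hKne
  · simp
  set c := ⨅ n, ⨆ x ∈ K, F n x
  -- Finite intersection property: finitely many of the sets `{F n ≥ c}` contain the one with
  -- the largest `n`, which is nonempty because `F n` attains its supremum on `K`.
  obtain ⟨x, hxK, hx⟩ : (K ∩ ⋂ n, F n ⁻¹' Set.Ici c).Nonempty := by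
    refine hK.inter_iInter_nonempty _ (fun n => (hF n).isClosed_preimage c) fun u => ?_
    obtain ⟨x, hxK, hmax⟩ := ((hF (u.sup id)).upperSemicontinuousOn K).exists_isMaxOn hKne hK
    refine ⟨x, hxK, Set.mem_iInter₂.mpr fun i hi => ?_⟩
    calc c ≤ ⨆ y ∈ K, F (u.sup id) y := iInf_le _ _
      _ ≤ F (u.sup id) x := iSup₂_le fun y hy => hmax hy
      _ ≤ F i x := hanti x hxK (Finset.le_sup (f := id) hi)
  exact le_iSup₂_of_le x hxK (le_iInf fun n => Set.mem_iInter.mp hx n)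

namespace EReal

theorem tendsto_coe_ennreal_sub {ι : Type*} {l : Filter ι} {a c : ι → ℝ≥0∞} {A C : ℝ≥0∞}
    (ha : Tendsto a l (𝓝 A)) (hc : Tendsto c l (𝓝 C)) (hA : A ≠ ⊤) :
    Tendsto (fun i => (a i : EReal) - c i) l (𝓝 ((A : EReal) - C)) := by
  simp only [sub_eq_add_neg]
  have hadd := continuousAt_add (p := ((A : EReal), -(C : EReal)))
    (Or.inl (by simpa using hA)) (Or.inl (coe_ennreal_ne_bot A))
  exact hadd.tendsto.comp (((continuous_coe_ennreal_ereal.tendsto A).comp ha).prodMk_nhds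
    ((continuous_coe_ennreal_ereal.tendsto C).comp hc).neg)

end EReal

namespace UEPaper

variable {X : Type}

lemma prefixList_eq_ofFn (ω : Path X) (m : ℕ) :
    prefixList ω m = List.ofFn fun i : Fin m => ω i := by
  apply List.ext_getElem <;> simp [prefixList]

def proj (m : ℕ) (ω : Path X) : Fin m → X := fun i => ω i

noncomputable def pathOf [Nonempty X] {m : ℕ} (v : Fin m → X) : Path X :=
  fun i => if h : i < m then v ⟨i, h⟩ else Classical.arbitrary X

lemma proj_pathOf [Nonempty X] {m : ℕ} (v : Fin m → X) : proj m (pathOf v) = v := by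
  funext i
  simp [proj, pathOf]

lemma mem_cyl_ofFn_iff {m : ℕ} (ω : Path X) (v : Fin m → X) :
    ω ∈ cyl (List.ofFn v) ↔ proj m ω = v := by
  simp only [cyl, List.length_ofFn, prefixList_eq_ofFn, List.ofFn_inj]
  rfl

lemma measurableSet_cyl (z : List X) : MeasurableSet (cyl z) :=
  MeasurableSpace.measurableSet_generateFrom ⟨z, rfl⟩

lemma NMeas.eq_pathOf_proj [Nonempty X] {m : ℕ} {g : Path X → EReal} (hg : NMeas m g)
    (ω : Path X) : g ω = g (pathOf (proj m ω)) :=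
  hg _ _ (by
    rw [prefixList_eq_ofFn, prefixList_eq_ofFn]
    exact congrArg List.ofFn (proj_pathOf _).symm)

section Finitary

variable [Fintype X]

lemma comp_proj_eq_sum_indicator {β : Type*} [AddCommMonoid β] {m : ℕ}
    (Φ : (Fin m → X) → β) :
    (fun ω => Φ (proj m ω)) = fun ω => ∑ v, (cyl (List.ofFn v)).indicator (fun _ => Φ v) ω := by
  funext ω
  rw [Finset.sum_eq_single_of_mem (proj m ω) (Finset.mem_univ _)]
  · rw [Set.indicator_of_mem ((mem_cyl_ofFn_iff ω _).mpr rfl)]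
  · intro v _ hv
    exact Set.indicator_of_notMem (fun h => hv ((mem_cyl_ofFn_iff ω v).mp h).symm) _

lemma integrable_comp_proj (μ : Measure (Path X)) [IsFiniteMeasure μ] {m : ℕ}
    (Φ : (Fin m → X) → ℝ) : Integrable (fun ω => Φ (proj m ω)) μ := by
  rw [comp_proj_eq_sum_indicator]
  exact integrable_finsetSum _ fun v _ =>
    (integrable_const (Φ v)).indicator (measurableSet_cyl _)

lemma integral_comp_proj (μ : Measure (Path X)) [IsFiniteMeasure μ] {m : ℕ}
    (Φ : (Fin m → X) → ℝ) :
    ∫ ω, Φ (proj m ω) ∂μ = ∑ v, μ.real (cyl (List.ofFn v)) * Φ v := by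
  rw [comp_proj_eq_sum_indicator, integral_finsetSum _ fun v _ =>
    (integrable_const (Φ v)).indicator (measurableSet_cyl _)]
  simp [integral_indicator_const _ (measurableSet_cyl _)]

end Finitary

lemma integralE_coe (μ : Measure (Path X)) {φ : Path X → ℝ} (hφ : Integrable φ μ) :
    integralE μ (fun ω => (φ ω : EReal)) = ∫ ω, φ ω ∂μ := by
  have hneg : ∀ ω, posPart (-(φ ω : EReal)) = ENNReal.ofReal (-φ ω) := fun ω => by
    rw [← EReal.coe_neg]; rfl
  have hfin : ∫⁻ ω, ENNReal.ofReal (-φ ω) ∂μ ≠ ⊤ := hφ.neg.lintegral_lt_top.ne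
  simp only [integralE, hneg]
  rw [integral_eq_lintegral_pos_part_sub_lintegral_neg_part hφ, EReal.coe_sub,
    EReal.coe_ennreal_toReal hφ.lintegral_lt_top.ne, EReal.coe_ennreal_toReal hfin]
  rfl

lemma measurable_comp_proj [Finite X] {β : Type*} [MeasurableSpace β] {m : ℕ}
    (Φ : (Fin m → X) → β) : Measurable fun ω => Φ (proj m ω) := by
  intro S _
  have hS : (fun ω => Φ (proj m ω)) ⁻¹' S = ⋃ v ∈ Φ ⁻¹' S, cyl (List.ofFn v) := by
    ext ω
    simp [mem_cyl_ofFn_iff]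
  rw [hS]
  exact .biUnion (Set.to_countable _) fun _ _ => measurableSet_cyl _

lemma NMeas.measurable [Nonempty X] [Finite X] {m : ℕ} {g : Path X → EReal} (hg : NMeas m g) :
    Measurable g := by
  simpa only [← hg.eq_pathOf_proj] using measurable_comp_proj fun v : Fin m → X => g (pathOf v)

lemma IsGamble.coe_toReal {g : Path X → EReal} (hg : IsGamble g) (ω : Path X) :
    ((g ω).toReal : EReal) = g ω := by
  obtain ⟨B, hB⟩ := hg
  refine EReal.coe_toReal (ne_top_of_le_ne_top (EReal.coe_ne_top B) (hB ω).2)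
    (ne_bot_of_le_ne_bot ?_ (hB ω).1)
  rw [← EReal.coe_neg]
  exact EReal.coe_ne_bot _

lemma IsGamble.bddBelow {g : Path X → EReal} (hg : IsGamble g) :
    ∃ B : ℝ, ∀ ω, (B : EReal) ≤ g ω := by
  obtain ⟨B, hB⟩ := hg
  exact ⟨-B, fun ω => by simpa only [EReal.coe_neg] using (hB ω).1⟩

lemma cylProb_nonneg [Nonempty X] [DecidableEq X] {q : List X → X → ℝ} (hq : ∀ t x, 0 ≤ q t x)
    (s z : List X) : 0 ≤ cylProb q s z := by
  unfold cylProb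
  split_ifs
  · exact Finset.prod_nonneg fun _ _ => hq _ _
  · exact zero_le_one
  · exact le_rfl

lemma continuous_cylProb [Nonempty X] [DecidableEq X] (s z : List X) :
    Continuous fun q : List X → X → ℝ => cylProb q s z := by
  unfold cylProb
  split_ifs
  · exact continuous_finsetProd _ fun _ _ => (continuous_apply _).comp (continuous_apply _)
  all_goals exact continuous_const

/-- `E_q(g|s)` for `g` depending only on the first `m` states (for other `g` it is junk). -/
noncomputable def treeExpect [Fintype X] [Nonempty X] [DecidableEq X] (q : List X → X → ℝ)
    (s : List X) (m : ℕ) (g : Path X → EReal) : ℝ :=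
  ∑ v : Fin m → X, cylProb q s (List.ofFn v) * (g (pathOf v)).toReal

lemma continuous_treeExpect [Fintype X] [Nonempty X] [DecidableEq X] (s : List X) (m : ℕ)
    (g : Path X → EReal) : Continuous fun q => treeExpect q s m g :=
  continuous_finsetSum _ fun _ _ => (continuous_cylProb s _).mul continuous_const

lemma integralE_eq_treeExpect [Fintype X] [Nonempty X] [DecidableEq X] {p : PreciseTree X}
    {s : List X} {μ : Measure (Path X)} (hμ : IsTreeMeasure p s μ) {m : ℕ}
    {g : Path X → EReal} (hg : NMeas m g) (hb : IsGamble g) :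
    integralE μ g = treeExpect p.p s m g := by
  have := hμ.1
  set Φ : (Fin m → X) → ℝ := fun v => (g (pathOf v)).toReal
  have hrepr : (fun ω => (Φ (proj m ω) : EReal)) = g :=
    funext fun ω => by rw [hb.coe_toReal, ← hg.eq_pathOf_proj]
  conv_lhs => rw [← hrepr]
  rw [integralE_coe _ (integrable_comp_proj _ _), integral_comp_proj]
  simp only [treeExpect, measureReal_def, hμ.2, ENNReal.toReal_ofReal (cylProb_nonneg p.nonneg _ _)]
  rfl

lemma integralE_mono (μ : Measure (Path X)) {f g : Path X → EReal} (h : ∀ ω, f ω ≤ g ω) :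
    integralE μ f ≤ integralE μ g :=
  EReal.sub_le_sub
    (EReal.coe_ennreal_le_coe_ennreal_iff.mpr
      (lintegral_mono fun ω => EReal.toENNReal_le_toENNReal (h ω)))
    (EReal.coe_ennreal_le_coe_ennreal_iff.mpr
      (lintegral_mono fun ω => EReal.toENNReal_le_toENNReal (EReal.neg_le_neg_iff.mpr (h ω))))

lemma integralE_le_upperInt (μ : Measure (Path X)) (f : Path X → EReal) :
    integralE μ f ≤ upperInt μ f :=
  le_sInf fun _ ⟨_, _, _, hfg, ha⟩ => ha ▸ integralE_mono μ hfg

lemma upperInt_eq_integralE (μ : Measure (Path X)) {g : Path X → EReal} (hg : Measurable g)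
    (hb : ∃ B : ℝ, ∀ ω, (B : EReal) ≤ g ω) : upperInt μ g = integralE μ g :=
  le_antisymm (sInf_le ⟨g, hg, hb, fun _ => le_rfl, rfl⟩) (integralE_le_upperInt μ g)

lemma upperInt_mono (μ : Measure (Path X)) {f g : Path X → EReal} (h : ∀ ω, f ω ≤ g ω) :
    upperInt μ f ≤ upperInt μ g :=
  le_sInf fun _ ⟨k, hk, hb, hgk, ha⟩ => sInf_le ⟨k, hk, hb, fun ω => (h ω).trans (hgk ω), ha⟩

lemma tendsto_integralE_of_antitone (μ : Measure (Path X)) [IsFiniteMeasure μ]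
    {g : ℕ → Path X → EReal} (hg : ∀ n, Measurable (g n)) (hanti : Antitone g)
    (hbdd : ∃ B : ℝ, ∀ ω, g 0 ω ≤ B) :
    Tendsto (fun n => integralE μ (g n)) atTop (𝓝 (integralE μ fun ω => ⨅ n, g n ω)) := by
  obtain ⟨B, hB⟩ := hbdd
  have hlim (ω : Path X) : Tendsto (fun n => g n ω) atTop (𝓝 (⨅ n, g n ω)) :=
    tendsto_atTop_iInf fun _ _ h => hanti h ω
  have hpos0 : ∫⁻ ω, posPart (g 0 ω) ∂μ ≠ ⊤ :=
    ne_top_of_le_ne_top (by simp [lintegral_const, ENNReal.mul_eq_top])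
      (lintegral_mono fun ω => EReal.toENNReal_le_toENNReal (hB ω) :
        ∫⁻ ω, posPart (g 0 ω) ∂μ ≤ ∫⁻ _, ENNReal.ofReal B ∂μ)
  refine EReal.tendsto_coe_ennreal_sub ?_ ?_ ?_
  · exact lintegral_tendsto_of_tendsto_of_antitone
      (fun n => (hg n).ereal_toENNReal.aemeasurable)
      (ae_of_all _ fun ω _ _ h => EReal.toENNReal_le_toENNReal (hanti h ω)) hpos0
      (ae_of_all _ fun ω => (EReal.continuous_toENNReal.tendsto _).comp (hlim ω))
  · exact lintegral_tendsto_of_tendsto_of_monotone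
      (fun n => (hg n).neg.ereal_toENNReal.aemeasurable)
      (ae_of_all _ fun ω _ _ h =>
        EReal.toENNReal_le_toENNReal (EReal.neg_le_neg_iff.mpr (hanti h ω)))
      (ae_of_all _ fun ω => (EReal.continuous_toENNReal.tendsto _).comp (hlim ω).neg)
  · exact ne_top_of_le_ne_top hpos0
      (lintegral_mono fun ω => EReal.toENNReal_le_toENNReal (iInf_le _ 0))

def credalSet [Fintype X] (P : ImpreciseTree X) : Set (List X → X → ℝ) := Set.univ.pi P.sets

lemma isCompact_credalSet [Fintype X] (P : ImpreciseTree X) : IsCompact (credalSet P) :=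
  isCompact_univ_pi fun t =>
    (isCompact_stdSimplex ℝ X).of_isClosed_subset (P.closed' t) fun q hq => P.prob' t q hq

def PreciseTree.ofMem [Fintype X] {P : ImpreciseTree X} {q : List X → X → ℝ}
    (hq : q ∈ credalSet P) : PreciseTree X where
  p := q
  nonneg t := (P.prob' t (q t) (hq t trivial)).1
  sum_one t := (P.prob' t (q t) (hq t trivial)).2

lemma compatible_ofMem [Fintype X] {P : ImpreciseTree X} {q : List X → X → ℝ}
    (hq : q ∈ credalSet P) : Compatible (PreciseTree.ofMem hq) P :=
  fun t => hq t trivial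

section UpperExpectation

variable [Fintype X] {Pm : PreciseTree X → List X → Measure (Path X)} {P : ImpreciseTree X}

lemma upperInt_le_muUE {p : PreciseTree X} (hp : Compatible p P) (f : Path X → EReal)
    (s : List X) : upperInt (Pm p s) f ≤ muUE Pm P f s :=
  le_iSup₂ (f := fun p (_ : Compatible p P) => upperInt (Pm p s) f) p hp

lemma muUE_mono {f g : Path X → EReal} (h : ∀ ω, f ω ≤ g ω) (s : List X) :
    muUE Pm P f s ≤ muUE Pm P g s :=
  iSup₂_mono fun _ _ => upperInt_mono _ h

lemma iInf_integralE_le_muUE {p : PreciseTree X} (hp : Compatible p P) {s : List X}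
    [IsFiniteMeasure (Pm p s)] {g : ℕ → Path X → EReal} (hg : ∀ n, Measurable (g n))
    (hanti : Antitone g) (hbdd : ∃ B : ℝ, ∀ ω, g 0 ω ≤ B) :
    ⨅ n, integralE (Pm p s) (g n) ≤ muUE Pm P (fun ω => ⨅ n, g n ω) s :=
  (ge_of_tendsto' (tendsto_integralE_of_antitone _ hg hanti hbdd) fun n => iInf_le _ n).trans
    ((integralE_le_upperInt _ _).trans (upperInt_le_muUE hp _ s))

lemma muUE_eq_iSup_treeExpect [Nonempty X] [DecidableEq X]
    (hPm : ∀ p s, IsTreeMeasure p s (Pm p s)) {m : ℕ} {g : Path X → EReal} (hg : NMeas m g)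
    (hb : IsGamble g) (s : List X) :
    muUE Pm P g s = ⨆ q ∈ credalSet P, (treeExpect q s m g : EReal) := by
  have hup (p : PreciseTree X) : upperInt (Pm p s) g = treeExpect p.p s m g := by
    rw [upperInt_eq_integralE _ hg.measurable hb.bddBelow, integralE_eq_treeExpect (hPm p s) hg hb]
  refine le_antisymm (iSup₂_le fun p hp => ?_) (iSup₂_le fun q hq => ?_)
  · rw [hup]
    exact le_iSup₂ (f := fun q (_ : q ∈ credalSet P) => (treeExpect q s m g : EReal)) p.p
      fun t _ => hp t
  · exact (hup (.ofMem hq)).symm.le.trans (upperInt_le_muUE (compatible_ofMem hq) g s)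

end UpperExpectation

variable [Fintype X] [Nonempty X] [DecidableEq X]

theorem stmt6 (P : ImpreciseTree X)
    (Pm : PreciseTree X → List X → Measure (Path X))
    (hPm : ∀ (p : PreciseTree X) (s : List X), IsTreeMeasure p s (Pm p s))
    (s : List X) (fn : ℕ → Path X → EReal) (f : Path X → EReal)
    (hfin : ∀ n, IsFinGamble (fn n)) (hanti : Antitone fn)
    (hlim : ∀ ω, f ω = ⨅ n, fn n ω) :
    Tendsto (fun n => muUE Pm P (fn n) s) atTop (nhds (muUE Pm P f s)) := by
  choose m hm using fun n => (hfin n).1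
  have hgam n := (hfin n).2
  obtain rfl : f = fun ω => ⨅ n, fn n ω := funext hlim
  convert tendsto_atTop_iInf fun a b hab => muUE_mono (hanti hab) s using 2
  refine le_antisymm (le_iInf fun n => muUE_mono (fun ω => iInf_le _ n) s) ?_
  have hexp (q) (hq : q ∈ credalSet P) (n : ℕ) :
      (treeExpect q s (m n) (fn n) : EReal) = integralE (Pm (.ofMem hq) s) (fn n) :=
    (integralE_eq_treeExpect (hPm (.ofMem hq) s) (hm n) (hgam n)).symm
  calc ⨅ n, muUE Pm P (fn n) s
      = ⨅ n, ⨆ q ∈ credalSet P, (treeExpect q s (m n) (fn n) : EReal) := by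
        simp only [muUE_eq_iSup_treeExpect hPm (hm _) (hgam _)]
    _ = ⨆ q ∈ credalSet P, ⨅ n, (treeExpect q s (m n) (fn n) : EReal) :=
        (isCompact_credalSet P).iInf_iSup_eq_iSup_iInf_of_antitone
          (fun n => (continuous_coe_real_ereal.comp
            (continuous_treeExpect s (m n) (fn n))).upperSemicontinuous)
          (fun q hq a b hab => by simpa only [hexp q hq] using integralE_mono _ (hanti hab))
    _ ≤ muUE Pm P (fun ω => ⨅ n, fn n ω) s := iSup₂_le fun q hq => by
        have := (hPm (.ofMem hq) s).1
        simpa only [hexp q hq] using iInf_integralE_le_muUE (compatible_ofMem hq)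
          (fun n => (hm n).measurable) hanti ((hgam 0).elim fun B hB => ⟨B, fun ω => (hB ω).2⟩)

end UEPaper
end
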